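/- arXiv:1602.08838 — 3 statements merged into one kernel-verified Lean document; each statement's English description precedes it below -/
import Mathlib

section
/- For any vector λ = (λ_1, ..., λ_n) ∈ ℝ^n with n ≥ 2 lying in the cone Γ_2 (i.e. σ_1(λ) > 0 and σ_2(λ) > 0), for every index l ∈ {1, ..., n} the sum ∑_{i ≠ l} λ_i is strictly positive. -/
/-! Since `σ₁² = 2σ₂ + ∑ λᵢ²` and `σ₂ > 0`, every `λₗ²` is strictly below `σ₁²`; as `σ₁ > 0`
this gives `λₗ < σ₁`, and the sum over `i ≠ l` is `σ₁ - λₗ`. -/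

open Finset

/-- First elementary symmetric polynomial. -/
def sigma1 {n : ℕ} (lam : Fin n → ℝ) : ℝ := ∑ i, lam i

/-- Second elementary symmetric polynomial: ∑_{i<j} λ_i λ_j. -/
def sigma2 {n : ℕ} (lam : Fin n → ℝ) : ℝ :=
  ∑ i, ∑ j, if i < j then lam i * lam j else 0

theorem sigma1_sq_eq {n : ℕ} (lam : Fin n → ℝ) :
    sigma1 lam ^ 2 = 2 * sigma2 lam + ∑ i, lam i ^ 2 := by
  have split (i j : Fin n) : lam i * lam j = (if i < j then lam i * lam j else 0) +
      (if j < i then lam j * lam i else 0) + (if i = j then lam i * lam j else 0) := by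
    rcases lt_trichotomy i j with h | rfl | h
    · simp [h, h.not_gt, h.ne]
    · simp
    · simp [h, h.not_gt, h.ne', mul_comm]
  calc sigma1 lam ^ 2 = ∑ i, ∑ j, lam i * lam j := by rw [sigma1, sq, sum_mul_sum]
    _ = ∑ i, ∑ j, ((if i < j then lam i * lam j else 0) +
          (if j < i then lam j * lam i else 0) + (if i = j then lam i * lam j else 0)) :=
      sum_congr rfl fun i _ => sum_congr rfl fun j _ => split i j
    _ = sigma2 lam + sigma2 lam + ∑ i, lam i ^ 2 := by
      simp only [sum_add_distrib]
      rw [sum_comm (f := fun i j => if j < i then lam j * lam i else 0)]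
      simp [sigma2, sq]
    _ = 2 * sigma2 lam + ∑ i, lam i ^ 2 := by ring

theorem lt_sigma1_of_pos {n : ℕ} {lam : Fin n → ℝ} (h1 : 0 < sigma1 lam) (h2 : 0 < sigma2 lam)
    (l : Fin n) : lam l < sigma1 lam := by
  have hsq : lam l ^ 2 < sigma1 lam ^ 2 :=
    calc lam l ^ 2 ≤ ∑ i, lam i ^ 2 :=
          single_le_sum (fun i _ => sq_nonneg (lam i)) (mem_univ l)
      _ < sigma1 lam ^ 2 := by rw [sigma1_sq_eq]; linarith
  exact lt_of_pow_lt_pow_left₀ 2 h1.le hsq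

theorem stmt0_general (n : ℕ) (lam : Fin n → ℝ)
    (h1 : 0 < sigma1 lam) (h2 : 0 < sigma2 lam) (l : Fin n) :
    0 < ∑ i ∈ Finset.univ.erase l, lam i := by
  rw [sum_erase_eq_sub (mem_univ l)]
  exact sub_pos.mpr (lt_sigma1_of_pos h1 h2 l)

theorem stmt0 (n : ℕ) (hn : 2 ≤ n) (lam : Fin n → ℝ)
    (h1 : 0 < sigma1 lam) (h2 : 0 < sigma2 lam) (l : Fin n) :
    0 < ∑ i ∈ Finset.univ.erase l, lam i :=
  stmt0_general n lam h1 h2 l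
end

section
/- For any λ ∈ Γ_2 ⊂ ℝ^n with eigenvalues ordered λ_1 ≥ λ_2 ≥ ... ≥ λ_n, one has λ_1 · σ_2^{1,1}(λ) ≥ (2/n) σ_2(λ), where σ_2^{1,1}(λ) = ∑_{i ≠ 1} λ_i is the partial derivative of σ_2 with respect to λ_1. -/
/-!
Split off the largest entry: with `a = λ₁`, `T = ∑_{i ≠ 1} λᵢ` and `σ₂'` the second elementary
symmetric function of the remaining `n - 1` entries, `σ₂ = a T + σ₂'`. Cauchy–Schwarz gives
`2 σ₂' ≤ (n - 2)/(n - 1) · T²`, and `T ≤ (n - 1) a` because `a` is the largest entry. In `Γ₂` one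
has `σ₁² = 2 σ₂ + ∑ λᵢ² > λ₁²`, so `σ₁ > λ₁`, i.e. `T > 0`; hence `2 σ₂' ≤ (n - 2) a T`, which is
the claim `n a T ≥ 2 σ₂`.
-/

open Finset

section SigmaTwo

variable {ι R : Type*} [LinearOrder ι] [CommRing R]

def sigma2On (s : Finset ι) (f : ι → R) : R :=
  ∑ i ∈ s, ∑ j ∈ s, if i < j then f i * f j else 0

lemma sigma2On_insert_of_lt {s : Finset ι} {a : ι} (ha : ∀ j ∈ s, a < j) (f : ι → R) :
    sigma2On (insert a s) f = f a * ∑ j ∈ s, f j + sigma2On s f := by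
  have has : a ∉ s := fun h => lt_irrefl a (ha a h)
  have hrow : ∀ i ∈ s, ∑ j ∈ insert a s, (if i < j then f i * f j else 0)
      = ∑ j ∈ s, if i < j then f i * f j else 0 := fun i hi => by
    rw [sum_insert has, if_neg (ha i hi).not_gt, zero_add]
  rw [sigma2On, sum_insert has, sum_congr rfl hrow, sum_insert has, if_neg (lt_irrefl a),
    zero_add, mul_sum, sum_congr rfl fun j hj => if_pos (ha j hj), sigma2On]

lemma sq_sum_eq_two_mul_sigma2On_add_sum_sq (s : Finset ι) (f : ι → R) :
    (∑ i ∈ s, f i) ^ 2 = 2 * sigma2On s f + ∑ i ∈ s, f i ^ 2 := by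
  induction s using Finset.induction_on_min with
  | empty => simp [sigma2On]
  | insert a s ha ih =>
    have has : a ∉ s := fun h => lt_irrefl a (ha a h)
    rw [sum_insert has, sum_insert has, sigma2On_insert_of_lt ha]
    linear_combination ih

variable [LinearOrder R] [IsStrictOrderedRing R]

lemma card_mul_two_mul_sigma2On_le (s : Finset ι) (f : ι → R) :
    #s * (2 * sigma2On s f) ≤ (#s - 1) * (∑ i ∈ s, f i) ^ 2 := by
  have hcs : (∑ i ∈ s, f i) ^ 2 ≤ #s * ∑ i ∈ s, f i ^ 2 := sq_sum_le_card_mul_sum_sq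
  linear_combination hcs - #s * sq_sum_eq_two_mul_sigma2On_add_sum_sq s f

lemma sum_erase_pos_of_sigma2On_pos {s : Finset ι} {f : ι → R} (hσ₁ : 0 < ∑ i ∈ s, f i)
    (hσ₂ : 0 < sigma2On s f) {a : ι} (ha : a ∈ s) : 0 < ∑ i ∈ s.erase a, f i := by
  have hsq : f a ^ 2 < (∑ i ∈ s, f i) ^ 2 := by
    have := single_le_sum (fun i _ => sq_nonneg (f i)) ha
    linarith [sq_sum_eq_two_mul_sigma2On_add_sum_sq s f]
  have hlt : f a < ∑ i ∈ s, f i := (le_abs_self _).trans_lt (abs_lt_of_sq_lt_sq hsq hσ₁.le)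
  linarith [add_sum_erase s f ha]

lemma two_mul_sigma2On_le_of_sum_le {s : Finset ι} {f : ι → R} {a : R}
    (hT : 0 < ∑ i ∈ s, f i) (hTa : ∑ i ∈ s, f i ≤ #s * a) :
    2 * sigma2On s f ≤ (#s - 1) * a * ∑ i ∈ s, f i := by
  set T := ∑ i ∈ s, f i
  have hs : (1 : R) ≤ #s := Nat.one_le_cast.2 (card_pos.2 (nonempty_of_sum_ne_zero hT.ne'))
  refine le_of_mul_le_mul_left ?_ (zero_lt_one.trans_le hs)
  calc #s * (2 * sigma2On s f) ≤ (#s - 1) * T * T := by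
        linear_combination card_mul_two_mul_sigma2On_le s f
    _ ≤ (#s - 1) * T * (#s * a) := by
        have : 0 ≤ (#s - 1 : R) * T := mul_nonneg (sub_nonneg.2 hs) hT.le
        gcongr
    _ = #s * ((#s - 1) * a * T) := by ring

end SigmaTwo

lemma sigma2_eq_sigma2On_univ {n : ℕ} (lam : Fin n → ℝ) : sigma2 lam = sigma2On univ lam := rfl

theorem stmt1 (n : ℕ) (hn : 2 ≤ n) (lam : Fin n → ℝ)
    (horder : ∀ i j : Fin n, i ≤ j → lam j ≤ lam i)
    (h1 : 0 < sigma1 lam) (h2 : 0 < sigma2 lam) :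
    lam ⟨0, by omega⟩ * (∑ i ∈ Finset.univ.erase (⟨0, by omega⟩ : Fin n), lam i)
      ≥ (2 / (n : ℝ)) * sigma2 lam := by
  set i₀ : Fin n := ⟨0, by omega⟩
  set a := lam i₀
  set s := univ.erase i₀
  set T := ∑ i ∈ s, lam i
  have hmin : ∀ j ∈ s, i₀ < j := fun j hj =>
    Fin.lt_def.2 (Nat.pos_of_ne_zero fun h => ne_of_mem_erase hj (Fin.ext h))
  have hsplit : sigma2 lam = a * T + sigma2On s lam := by
    rw [sigma2_eq_sigma2On_univ, ← insert_erase (mem_univ i₀), sigma2On_insert_of_lt hmin]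
  have hcard : (#s : ℝ) = n - 1 := by
    rw [card_erase_of_mem (mem_univ _), card_univ, Fintype.card_fin, Nat.cast_sub (by omega),
      Nat.cast_one]
  have hT : 0 < T := sum_erase_pos_of_sigma2On_pos h1 h2 (mem_univ i₀)
  have hTa : T ≤ #s * a := by
    rw [← nsmul_eq_mul]
    exact sum_le_card_nsmul s lam a fun j hj => horder i₀ j (hmin j hj).le
  have hrest := two_mul_sigma2On_le_of_sum_le hT hTa
  rw [hcard] at hrest
  rw [ge_iff_le, div_mul_eq_mul_div, div_le_iff₀ (by exact_mod_cast (by omega : 0 < n)), hsplit]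
  linear_combination hrest
end

section
/- Let λ, μ ∈ Γ_2 ⊂ ℝ^n. Then Garding's inequality holds for σ_2: ∑_{i=1}^n (∂σ_2/∂λ_i)(λ) · μ_i ≥ 2 σ_2(λ)^{1/2} σ_2(μ)^{1/2}, where ∂σ_2/∂λ_i (λ) = ∑_{j ≠ i} λ_j. -/
/-!
Write `‖v‖ = √(∑ vᵢ²)`. Since `2 σ₂(v) = σ₁(v)² - ‖v‖²`, a vector of `Γ₂` satisfies `‖v‖ ≤ σ₁(v)`,
and the left-hand side equals `σ₁(λ) σ₁(μ) - ⟨λ, μ⟩`. Cauchy–Schwarz bounds this from below by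
`σ₁(λ) σ₁(μ) - ‖λ‖ ‖μ‖`, and Aczél's inequality `√(a² - b²) √(c² - d²) ≤ ac - bd` turns that into
`√(2 σ₂(λ)) √(2 σ₂(μ))`.
-/

open Finset

theorem sqrt_sq_sub_sq_mul_sqrt_sq_sub_sq_le {a b c d : ℝ} (hb : |b| ≤ a) (hd : |d| ≤ c) :
    √(a ^ 2 - b ^ 2) * √(c ^ 2 - d ^ 2) ≤ a * c - b * d := by
  have hba : b ^ 2 ≤ a ^ 2 := sq_le_sq' (abs_le.mp hb).1 (abs_le.mp hb).2
  have hbd : b * d ≤ a * c := calc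
    b * d ≤ |b| * |d| := abs_mul b d ▸ le_abs_self _
    _ ≤ a * c := mul_le_mul hb hd (abs_nonneg d) ((abs_nonneg b).trans hb)
  rw [← Real.sqrt_mul (by linarith), Real.sqrt_le_left (by linarith)]
  nlinarith [sq_nonneg (a * d - b * c)]

section Gamma2

variable {n : ℕ}

theorem two_mul_sigma2 (v : Fin n → ℝ) : 2 * sigma2 v = sigma1 v ^ 2 - ∑ i, v i ^ 2 := by
  have hsq : sigma1 v ^ 2 = ∑ i, ∑ j, ((if i < j then v i * v j else 0)
      + (if j < i then v j * v i else 0) + (if i = j then v i ^ 2 else 0)) := by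
    rw [sigma1, sq, sum_mul_sum]
    refine sum_congr rfl fun i _ => sum_congr rfl fun j _ => ?_
    rcases lt_trichotomy i j with h | rfl | h
    · simp [h, h.ne, not_lt.mpr h.le]
    · simp [sq]
    · simp [h, h.ne', not_lt.mpr h.le, mul_comm]
  simp only [hsq, sum_add_distrib, sum_ite_eq, mem_univ, if_true]
  rw [sum_comm (f := fun i j => if j < i then v j * v i else 0), sigma2]
  ring

theorem sum_sigma1_sub_mul (lam mu : Fin n → ℝ) :
    ∑ i, (sigma1 lam - lam i) * mu i = sigma1 lam * sigma1 mu - ∑ i, lam i * mu i := by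
  simp only [sub_mul, sum_sub_distrib, ← mul_sum, sigma1]

theorem abs_sqrt_sum_sq_le_sigma1 {v : Fin n → ℝ} (h1 : 0 < sigma1 v) (h2 : 0 ≤ sigma2 v) :
    |√(∑ i, v i ^ 2)| ≤ sigma1 v := by
  rw [abs_of_nonneg (Real.sqrt_nonneg _), Real.sqrt_le_left h1.le]
  linarith [two_mul_sigma2 v]

theorem sqrt_sigma1_sq_sub_sum_sq (v : Fin n → ℝ) :
    √(sigma1 v ^ 2 - √(∑ i, v i ^ 2) ^ 2) = √2 * √(sigma2 v) := by
  rw [Real.sq_sqrt (sum_nonneg fun i _ => sq_nonneg (v i)), ← two_mul_sigma2,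
    Real.sqrt_mul zero_le_two]

end Gamma2

theorem stmt2_general (n : ℕ) (lam mu : Fin n → ℝ)
    (hlam : 0 < sigma1 lam ∧ 0 < sigma2 lam)
    (hmu : 0 < sigma1 mu ∧ 0 < sigma2 mu) :
    ∑ i, (sigma1 lam - lam i) * mu i
      ≥ 2 * Real.sqrt (sigma2 lam) * Real.sqrt (sigma2 mu) := by
  calc 2 * √(sigma2 lam) * √(sigma2 mu)
      = (√2 * √(sigma2 lam)) * (√2 * √(sigma2 mu)) := by
        linear_combination (-√(sigma2 lam) * √(sigma2 mu)) * Real.mul_self_sqrt zero_le_two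
    _ = √(sigma1 lam ^ 2 - √(∑ i, lam i ^ 2) ^ 2) * √(sigma1 mu ^ 2 - √(∑ i, mu i ^ 2) ^ 2) := by
        rw [sqrt_sigma1_sq_sub_sum_sq, sqrt_sigma1_sq_sub_sum_sq]
    _ ≤ sigma1 lam * sigma1 mu - √(∑ i, lam i ^ 2) * √(∑ i, mu i ^ 2) :=
        sqrt_sq_sub_sq_mul_sqrt_sq_sub_sq_le (abs_sqrt_sum_sq_le_sigma1 hlam.1 hlam.2.le)
          (abs_sqrt_sum_sq_le_sigma1 hmu.1 hmu.2.le)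
    _ ≤ sigma1 lam * sigma1 mu - ∑ i, lam i * mu i := by
        gcongr; exact Real.sum_mul_le_sqrt_mul_sqrt _ _ _
    _ = ∑ i, (sigma1 lam - lam i) * mu i := (sum_sigma1_sub_mul lam mu).symm

theorem stmt2 (n : ℕ) (hn : 2 ≤ n) (lam mu : Fin n → ℝ)
    (hlam : 0 < sigma1 lam ∧ 0 < sigma2 lam)
    (hmu : 0 < sigma1 mu ∧ 0 < sigma2 mu) :
    ∑ i, (sigma1 lam - lam i) * mu i
      ≥ 2 * Real.sqrt (sigma2 lam) * Real.sqrt (sigma2 mu) :=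
  stmt2_general n lam mu hlam hmu
end
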